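/- Assume conditions (A1), (A2) and (A3). Then for every λ ≥ 0, lim_{t→∞} (G(λ + c(t)) − G(c(t))) = G(λ). (Probabilistically: conditionally on A = t, the distribution of the population size Z^A just before the MRCA converges to the distribution of the stationary population size Z₀ as t → ∞.) -/

import Mathlib

open MeasureTheory Real Set Filter

/-- The (sub)-critical branching mechanism
`ψ(z) = b z + σ z² + ∫₀^∞ (e^{−z u} − 1 + z u) m(du)`. -/
noncomputable def psi (b σ : ℝ) (m : Measure ℝ) (z : ℝ) : ℝ :=
  b * z + σ * z ^ 2 + ∫ u in Ioi (0 : ℝ), (Real.exp (-(z * u)) - 1 + z * u) ∂m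

/-- Condition (A3): either `σ > 0` or `∫₀^1 u m(du) = ∞`. -/
def condA3 (σ : ℝ) (m : Measure ℝ) : Prop :=
  0 < σ ∨ ∫⁻ u in Ioc (0 : ℝ) 1, ENNReal.ofReal u ∂m = ⊤

/-- `v t λ ∈ (0, λ]` is the unique solution of `∫_{v_t(λ)}^{λ} dz/ψ(z) = t`
(the cumulant semigroup). -/
def IsCumulant (b σ : ℝ) (m : Measure ℝ) (v : ℝ → ℝ → ℝ) : Prop :=
  ∀ lam > (0 : ℝ), ∀ t ≥ (0 : ℝ),
    v t lam ∈ Ioc 0 lam ∧ ∫ z in (v t lam)..lam, (psi b σ m z)⁻¹ = t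

/-- The immigration mechanism `F(z) = β z + ∫₀^∞ (1 − e^{−z u}) n(du)`. -/
noncomputable def Fim (β : ℝ) (n : Measure ℝ) (z : ℝ) : ℝ :=
  β * z + ∫ u in Ioi (0 : ℝ), (1 - Real.exp (-(z * u))) ∂n

/-- Condition (A2): `∫₀^λ F(z)/ψ(z) dz < ∞` for some `λ > 0`. -/
def condA2 (b σ β : ℝ) (m n : Measure ℝ) : Prop :=
  ∃ lam > (0 : ℝ), IntegrableOn (fun z => Fim β n z / psi b σ m z) (Ioo 0 lam)

/-- Under (A1) and (A3), `c(t) ∈ (0,∞)` is defined by `∫_{c(t)}^∞ dz/ψ(z) = t`. -/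
def IsExtinctionRate (b σ : ℝ) (m : Measure ℝ) (c : ℝ → ℝ) : Prop :=
  ∀ t > (0 : ℝ), 0 < c t ∧ ∫ z in Ioi (c t), (psi b σ m z)⁻¹ = t

/-
Substituting s = ∫_z^λ dw/ψ(w), which maps (0, λ) onto (0, ∞) exactly because v_s(λ) exists for
every s, turns G(λ) = ∫₀^∞ F(v_s(λ)) ds into ∫₀^λ F(z)/ψ(z) dz; by (A2), and since F is monotone
and 1/ψ continuous away from 0, F/ψ is integrable on every [0, B]. So G(λ + c(t)) − G(c(t)) is
H(λ + c(t)) − H(c(t)) for the continuous primitive H of F/ψ, and it remains to see c(t) → 0⁺: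
if c(t) ≥ ε then t = ∫_{c(t)}^∞ dz/ψ ≤ ∫_ε^∞ dz/ψ, which is finite because the integral
defining c(1) is.
-/

open Topology

namespace CSBP

section ExpBounds

lemma exp_neg_sub_one_add_nonneg (x : ℝ) : 0 ≤ exp (-x) - 1 + x := by
  linarith [add_one_le_exp (-x)]

lemma exp_neg_sub_one_add_pos {x : ℝ} (hx : x ≠ 0) : 0 < exp (-x) - 1 + x := by
  linarith [add_one_lt_exp (neg_ne_zero.2 hx)]

lemma exp_neg_sub_one_add_le {x : ℝ} (hx : 0 ≤ x) : exp (-x) - 1 + x ≤ min x (x ^ 2) := by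
  have hexp : exp (-x) ≤ 1 := exp_le_one_iff.2 (neg_nonpos.2 hx)
  refine le_min (by linarith) ?_
  rcases le_or_gt x 1 with h | h
  · have := abs_exp_sub_one_sub_id_le (x := -x) (by rwa [abs_neg, abs_of_nonneg hx])
    rw [neg_sq] at this
    linarith [le_abs_self (exp (-x) - 1 - -x)]
  · nlinarith

lemma norm_psi_integrand_le {z u : ℝ} (hz : 0 ≤ z) (hu : 0 ≤ u) :
    ‖exp (-(z * u)) - 1 + z * u‖ ≤ (z + z ^ 2) * min u (u ^ 2) := by
  have h := exp_neg_sub_one_add_le (mul_nonneg hz hu)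
  rw [norm_of_nonneg (exp_neg_sub_one_add_nonneg _)]
  rcases le_total u 1 with hu1 | hu1
  · rw [min_eq_right (by nlinarith)]
    nlinarith [min_le_right (z * u) ((z * u) ^ 2)]
  · rw [min_eq_left (by nlinarith)]
    nlinarith [min_le_left (z * u) ((z * u) ^ 2)]

lemma norm_Fim_integrand_le {z u : ℝ} (hz : 0 ≤ z) (hu : 0 ≤ u) :
    ‖1 - exp (-(z * u))‖ ≤ (1 + z) * min 1 u := by
  have hzu : 0 ≤ z * u := mul_nonneg hz hu
  have hexp : exp (-(z * u)) ≤ 1 := exp_le_one_iff.2 (neg_nonpos.2 hzu)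
  have hlin : 1 - z * u ≤ exp (-(z * u)) := by linarith [add_one_le_exp (-(z * u))]
  rw [norm_of_nonneg (by linarith)]
  rcases le_total 1 u with hu1 | hu1
  · rw [min_eq_left hu1]
    nlinarith [exp_nonneg (-(z * u))]
  · rw [min_eq_right hu1]
    nlinarith

end ExpBounds

section Mechanisms

variable {b σ β : ℝ} {m n : Measure ℝ}

lemma integrableOn_psi_integrand (hm : IntegrableOn (fun u => min u (u ^ 2)) (Ioi 0) m)
    {z : ℝ} (hz : 0 ≤ z) :
    IntegrableOn (fun u => exp (-(z * u)) - 1 + z * u) (Ioi 0) m := by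
  refine Integrable.mono' (hm.const_mul (z + z ^ 2))
    (Continuous.aestronglyMeasurable (by fun_prop)) ?_
  filter_upwards [ae_restrict_mem measurableSet_Ioi] with u hu
  exact norm_psi_integrand_le hz (le_of_lt hu)

lemma psi_pos (hb : 0 ≤ b) (hσ : 0 ≤ σ)
    (hm : IntegrableOn (fun u => min u (u ^ 2)) (Ioi 0) m) (hA3 : condA3 σ m)
    {z : ℝ} (hz : 0 < z) : 0 < psi b σ m z := by
  have hbz : 0 ≤ b * z := mul_nonneg hb hz.le
  have hσz : 0 ≤ σ * z ^ 2 := by positivity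
  have hI : 0 ≤ ∫ u in Ioi (0 : ℝ), (exp (-(z * u)) - 1 + z * u) ∂m :=
    setIntegral_nonneg measurableSet_Ioi fun u _ => exp_neg_sub_one_add_nonneg _
  unfold psi
  rcases hA3 with hσ_pos | hm_inf
  · have : 0 < σ * z ^ 2 := by positivity
    linarith
  · suffices 0 < ∫ u in Ioi (0 : ℝ), (exp (-(z * u)) - 1 + z * u) ∂m by linarith
    have hm01 : m (Ioc 0 1) ≠ 0 := fun h0 => by
      rw [setLIntegral_measure_zero _ _ h0] at hm_inf
      exact ENNReal.zero_ne_top hm_inf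
    rw [setIntegral_pos_iff_support_of_nonneg_ae
      (Eventually.of_forall fun u => exp_neg_sub_one_add_nonneg _)
      (integrableOn_psi_integrand hm hz.le)]
    refine (pos_iff_ne_zero.2 hm01).trans_le (measure_mono fun u hu => ⟨?_, hu.1⟩)
    exact (exp_neg_sub_one_add_pos (mul_pos hz hu.1).ne').ne'

lemma continuousOn_psi (hm : IntegrableOn (fun u => min u (u ^ 2)) (Ioi 0) m) :
    ContinuousOn (psi b σ m) (Ioi 0) := by
  intro z₀ hz₀
  refine ContinuousAt.continuousWithinAt (ContinuousAt.add (by fun_prop) ?_)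
  refine continuousAt_of_dominated
    (bound := fun u => ((z₀ + 1) + (z₀ + 1) ^ 2) * min u (u ^ 2))
    (Eventually.of_forall fun _ => Continuous.aestronglyMeasurable (by fun_prop)) ?_
    (hm.const_mul _) (Eventually.of_forall fun _ => by fun_prop)
  filter_upwards [Ioo_mem_nhds hz₀ (lt_add_one z₀)] with z hz
  filter_upwards [ae_restrict_mem measurableSet_Ioi] with u hu
  refine (norm_psi_integrand_le hz.1.le (le_of_lt hu)).trans ?_
  have hmin : 0 ≤ min u (u ^ 2) := le_min (le_of_lt hu) (sq_nonneg u)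
  gcongr <;> linarith [hz.1, hz.2]

lemma integrableOn_Fim_integrand (hn : IntegrableOn (fun u => min 1 u) (Ioi 0) n)
    {z : ℝ} (hz : 0 ≤ z) :
    IntegrableOn (fun u => 1 - exp (-(z * u))) (Ioi 0) n := by
  refine Integrable.mono' (hn.const_mul (1 + z))
    (Continuous.aestronglyMeasurable (by fun_prop)) ?_
  filter_upwards [ae_restrict_mem measurableSet_Ioi] with u hu
  exact norm_Fim_integrand_le hz (le_of_lt hu)

lemma Fim_zero : Fim β n 0 = 0 := by
  simp [Fim]

lemma monotoneOn_Fim (hβ : 0 ≤ β) (hn : IntegrableOn (fun u => min 1 u) (Ioi 0) n) :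
    MonotoneOn (Fim β n) (Ici 0) := by
  intro z hz z' hz' hzz'
  have hlin : β * z ≤ β * z' := mul_le_mul_of_nonneg_left hzz' hβ
  have hint : ∫ u in Ioi (0 : ℝ), (1 - exp (-(z * u))) ∂n ≤
      ∫ u in Ioi (0 : ℝ), (1 - exp (-(z' * u))) ∂n := by
    refine setIntegral_mono_on (integrableOn_Fim_integrand hn hz)
      (integrableOn_Fim_integrand hn hz') measurableSet_Ioi fun u hu => ?_
    have : exp (-(z' * u)) ≤ exp (-(z * u)) :=
      exp_le_exp.2 (neg_le_neg (mul_le_mul_of_nonneg_right hzz' (le_of_lt hu)))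
    linarith
  unfold Fim
  linarith

end Mechanisms

section PositiveIntegrand

variable {f : ℝ → ℝ}

lemma intervalIntegrable_of_continuousOn_Ioi (hf : ContinuousOn f (Ioi 0)) {a a' : ℝ}
    (ha : 0 < a) (ha' : 0 < a') : IntervalIntegrable f volume a a' :=
  (hf.mono fun _ hx => (lt_min ha ha').trans_le hx.1).intervalIntegrable

lemma integrableOn_Ioi_of_continuousOn_Ioi (hf : ContinuousOn f (Ioi 0)) {a ε : ℝ}
    (ha : IntegrableOn f (Ioi a)) (hε : 0 < ε) : IntegrableOn f (Ioi ε) := by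
  refine (((hf.mono fun _ hx => hε.trans_le hx.1).integrableOn_Icc (b := a)).union ha).mono_set
    fun x hx => ?_
  rcases le_or_gt x a with h | h
  · exact Or.inl ⟨le_of_lt hx, h⟩
  · exact Or.inr h

lemma strictAntiOn_integral_left (hf : ContinuousOn f (Ioi 0)) (hpos : ∀ z > 0, 0 < f z)
    (μ : ℝ) (hμ : 0 < μ) : StrictAntiOn (fun z => ∫ w in z..μ, f w) (Ioi 0) := by
  intro x hx y hy hxy
  have hsplit := intervalIntegral.integral_add_adjacent_intervals
    (intervalIntegrable_of_continuousOn_Ioi hf hx hy)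
    (intervalIntegrable_of_continuousOn_Ioi hf hy hμ)
  have hxy_pos : 0 < ∫ w in x..y, f w :=
    intervalIntegral.intervalIntegral_pos_of_pos_on
      (intervalIntegrable_of_continuousOn_Ioi hf hx hy)
      (fun z hz => hpos z (hx.trans hz.1)) hxy
  show ∫ w in y..μ, f w < ∫ w in x..μ, f w
  linarith

lemma tendsto_nhdsGT_zero_of_setIntegral_Ioi (hf : ContinuousOn f (Ioi 0))
    (hpos : ∀ z > 0, 0 < f z) {c : ℝ → ℝ} (hc : ∀ t > 0, 0 < c t ∧ ∫ z in Ioi (c t), f z = t) :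
    Tendsto c atTop (𝓝[>] 0) := by
  have hc1 : IntegrableOn f (Ioi (c 1)) :=
    Integrable.of_integral_ne_zero (by rw [(hc 1 one_pos).2]; exact one_ne_zero)
  refine tendsto_nhdsWithin_iff.2 ⟨tendsto_order.2 ⟨fun a ha => ?_, fun ε hε => ?_⟩, ?_⟩
  · filter_upwards [eventually_gt_atTop 0] with t ht using ha.trans (hc t ht).1
  · filter_upwards [eventually_gt_atTop (max 0 (∫ z in Ioi ε, f z))] with t ht
    have ht0 : 0 < t := (le_max_left _ _).trans_lt ht
    by_contra! hεc
    have : ∫ z in Ioi (c t), f z ≤ ∫ z in Ioi ε, f z :=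
      setIntegral_mono_set (integrableOn_Ioi_of_continuousOn_Ioi hf hc1 hε)
        (ae_restrict_of_forall_mem measurableSet_Ioi fun z hz => (hpos z (hε.trans hz)).le)
        (Ioi_subset_Ioi hεc).eventuallyLE
    linarith [(hc t ht0).2, le_max_right 0 (∫ z in Ioi ε, f z)]
  · filter_upwards [eventually_gt_atTop 0] with t ht using (hc t ht).1

end PositiveIntegrand

section Cumulant

variable {ψ : ℝ → ℝ} (hψ : ContinuousOn ψ (Ioi 0)) (hψ_pos : ∀ z > 0, 0 < ψ z)
  {v : ℝ → ℝ → ℝ}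
  (hv : ∀ lam > (0 : ℝ), ∀ t ≥ (0 : ℝ),
    v t lam ∈ Ioc 0 lam ∧ ∫ z in (v t lam)..lam, (ψ z)⁻¹ = t)

include hψ hψ_pos hv

lemma cumulant_integral_inv_eq {μ z : ℝ} (hμ : 0 < μ) (hz : z ∈ Ioc 0 μ) :
    v (∫ w in z..μ, (ψ w)⁻¹) μ = z := by
  have hnonneg : 0 ≤ ∫ w in z..μ, (ψ w)⁻¹ :=
    intervalIntegral.integral_nonneg hz.2 fun w hw =>
      (inv_pos.2 (hψ_pos w (hz.1.trans_le hw.1))).le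
  obtain ⟨hmem, heq⟩ := hv μ hμ _ hnonneg
  exact (strictAntiOn_integral_left (hψ.inv₀ fun w hw => (hψ_pos w hw).ne')
    (fun w hw => inv_pos.2 (hψ_pos w hw)) μ hμ).injOn hmem.1 hz.1 heq

lemma image_integral_inv_Ioo {μ : ℝ} (hμ : 0 < μ) :
    (fun z => ∫ w in z..μ, (ψ w)⁻¹) '' Ioo 0 μ = Ioi 0 := by
  have hanti := strictAntiOn_integral_left (hψ.inv₀ fun w hw => (hψ_pos w hw).ne')
    (fun w hw => inv_pos.2 (hψ_pos w hw)) μ hμ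
  ext s
  constructor
  · rintro ⟨z, hz, rfl⟩
    simpa using hanti hz.1 hμ hz.2
  · intro hs
    obtain ⟨hmem, heq⟩ := hv μ hμ s (le_of_lt hs)
    refine ⟨v s μ, ⟨hmem.1, hmem.2.lt_of_ne fun he => ?_⟩, heq⟩
    rw [he, intervalIntegral.integral_same] at heq
    exact (ne_of_lt hs) heq

lemma setIntegral_Ioi_comp_cumulant {μ : ℝ} (hμ : 0 < μ) (g : ℝ → ℝ) :
    ∫ s in Ioi 0, g (v s μ) = ∫ z in Ioo 0 μ, g z / ψ z := by
  have hf : ContinuousOn (fun z => (ψ z)⁻¹) (Ioi 0) := hψ.inv₀ fun w hw => (hψ_pos w hw).ne'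
  have hderiv : ∀ z ∈ Ioo 0 μ,
      HasDerivWithinAt (fun z => ∫ w in z..μ, (ψ w)⁻¹) (-(ψ z)⁻¹) (Ioo 0 μ) z :=
    fun z hz => (intervalIntegral.integral_hasDerivAt_left
      (intervalIntegrable_of_continuousOn_Ioi hf hz.1 hμ)
      (hf.stronglyMeasurableAtFilter isOpen_Ioi z hz.1)
      (hf.continuousAt (Ioi_mem_nhds hz.1))).hasDerivWithinAt
  have hinj : InjOn (fun z => ∫ w in z..μ, (ψ w)⁻¹) (Ioo 0 μ) :=
    (strictAntiOn_integral_left hf (fun w hw => inv_pos.2 (hψ_pos w hw)) μ hμ).injOn.mono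
      fun _ hz => hz.1
  rw [← image_integral_inv_Ioo hψ hψ_pos hv hμ,
    integral_image_eq_integral_abs_deriv_smul measurableSet_Ioo hderiv hinj]
  refine setIntegral_congr_fun measurableSet_Ioo fun z hz => ?_
  rw [cumulant_integral_inv_eq hψ hψ_pos hv hμ ⟨hz.1, hz.2.le⟩, abs_neg,
    abs_of_pos (inv_pos.2 (hψ_pos z hz.1)), smul_eq_mul, div_eq_inv_mul]

lemma setIntegral_Ioi_comp_cumulant_eq_intervalIntegral (hv0 : ∀ t ≥ (0 : ℝ), v t 0 = 0)
    {g : ℝ → ℝ} (hg : g 0 = 0) {μ : ℝ} (hμ : 0 ≤ μ) :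
    ∫ s in Ioi 0, g (v s μ) = ∫ z in 0..μ, g z / ψ z := by
  rcases hμ.eq_or_lt with rfl | hμ
  · rw [intervalIntegral.integral_same, setIntegral_congr_fun measurableSet_Ioi
      (g := fun _ => 0) fun s hs => by simp only [hv0 s (le_of_lt hs), hg]]
    simp
  · rw [intervalIntegral.integral_of_le hμ.le, integral_Ioc_eq_integral_Ioo,
      setIntegral_Ioi_comp_cumulant hψ hψ_pos hv hμ]

end Cumulant

lemma tendsto_intervalIntegral_add_sub {E : Type*} [NormedAddCommGroup E] [NormedSpace ℝ E]
    {f : ℝ → E} {a : ℝ} (ha : 0 ≤ a) (hf : IntegrableOn f (Icc 0 (a + 1)))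
    {l : Filter ℝ} {x : ℝ → ℝ} (hx : Tendsto x l (𝓝[>] 0)) :
    Tendsto (fun t => (∫ z in 0..(a + x t), f z) - ∫ z in 0..x t, f z) l
      (𝓝 (∫ z in 0..a, f z)) := by
  have h01 : (0 : ℝ) ≤ a + 1 := by linarith
  have hprim : ContinuousOn (fun y => ∫ z in 0..y, f z) (Icc 0 (a + 1)) := by
    rw [← uIcc_of_le h01]
    exact intervalIntegral.continuousOn_primitive_interval (by rwa [uIcc_of_le h01])
  have hsmall : ∀ᶠ t in l, x t ∈ Ioo 0 1 := hx (Ioo_mem_nhdsGT one_pos)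
  have hx0 : Tendsto x l (𝓝[Icc 0 (a + 1)] 0) :=
    tendsto_nhdsWithin_iff.2 ⟨tendsto_nhdsWithin_iff.1 hx |>.1,
      hsmall.mono fun t ht => ⟨ht.1.le, by linarith [ht.2]⟩⟩
  have hax : Tendsto (fun t => a + x t) l (𝓝[Icc 0 (a + 1)] a) := by
    refine tendsto_nhdsWithin_iff.2
      ⟨?_, hsmall.mono fun t ht => ⟨by linarith [ht.1], by linarith [ht.2]⟩⟩
    simpa using (tendsto_nhdsWithin_iff.1 hx).1.const_add a
  have := ((hprim a ⟨ha, by linarith⟩).tendsto.comp hax).sub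
    ((hprim 0 ⟨le_rfl, by linarith⟩).tendsto.comp hx0)
  simpa using this

lemma integrableOn_Fim_div_psi {b σ β : ℝ} {m n : Measure ℝ} (hb : 0 ≤ b) (hσ : 0 ≤ σ)
    (hβ : 0 ≤ β) (hm : IntegrableOn (fun u => min u (u ^ 2)) (Ioi 0) m)
    (hn : IntegrableOn (fun u => min 1 u) (Ioi 0) n)
    (hA2 : condA2 b σ β m n) (hA3 : condA3 σ m) (B : ℝ) :
    IntegrableOn (fun z => Fim β n z / psi b σ m z) (Icc 0 B) := by
  obtain ⟨lam₀, hlam₀, hint⟩ := hA2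
  have hpos : ∀ z ∈ Icc lam₀ B, 0 < z := fun z hz => hlam₀.trans_le hz.1
  have htail : IntegrableOn (fun z => Fim β n z / psi b σ m z) (Icc lam₀ B) := by
    simp only [div_eq_mul_inv]
    exact ((monotoneOn_Fim hβ hn).mono fun z hz => (hpos z hz).le).integrableOn_isCompact
      isCompact_Icc |>.mul_continuousOn
      (((continuousOn_psi hm).mono hpos).inv₀ fun z hz => (psi_pos hb hσ hm hA3 (hpos z hz)).ne')
      isCompact_Icc
  rw [integrableOn_Icc_iff_integrableOn_Ioo]
  refine (hint.union htail).mono_set fun z hz => ?_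
  rcases lt_or_ge z lam₀ with h | h
  · exact Or.inl ⟨hz.1, h⟩
  · exact Or.inr ⟨h, hz.2.le⟩

end CSBP

open CSBP

theorem conditional_law_converges_general (b σ β : ℝ) (m n : Measure ℝ)
    (hb : 0 ≤ b) (hσ : 0 ≤ σ) (hβ : 0 ≤ β)
    (hm : IntegrableOn (fun u => min u (u ^ 2)) (Ioi 0) m)
    (hn : IntegrableOn (fun u => min 1 u) (Ioi 0) n)
    (hA2 : condA2 b σ β m n) (hA3 : condA3 σ m)
    (v : ℝ → ℝ → ℝ) (hv : IsCumulant b σ m v)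
    (hv0 : ∀ t ≥ (0 : ℝ), v t 0 = 0)
    (c : ℝ → ℝ) (hc : IsExtinctionRate b σ m c) :
    ∀ lam ≥ (0 : ℝ),
      Tendsto
        (fun t => (∫ s in Ioi (0 : ℝ), Fim β n (v s (lam + c t))) -
          ∫ s in Ioi (0 : ℝ), Fim β n (v s (c t)))
        atTop (nhds (∫ s in Ioi (0 : ℝ), Fim β n (v s lam))) := by
  intro lam hlam
  have hψ : ContinuousOn (psi b σ m) (Ioi 0) := continuousOn_psi hm
  have hψ_pos : ∀ z > 0, 0 < psi b σ m z := fun z hz => psi_pos hb hσ hm hA3 hz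
  have hG : ∀ μ ≥ (0 : ℝ), ∫ s in Ioi (0 : ℝ), Fim β n (v s μ) =
      ∫ z in 0..μ, Fim β n z / psi b σ m z := fun μ hμ =>
    setIntegral_Ioi_comp_cumulant_eq_intervalIntegral hψ hψ_pos hv hv0 Fim_zero hμ
  have hc0 : Tendsto c atTop (𝓝[>] 0) :=
    tendsto_nhdsGT_zero_of_setIntegral_Ioi (hψ.inv₀ fun z hz => (hψ_pos z hz).ne')
      (fun z hz => inv_pos.2 (hψ_pos z hz)) hc
  rw [hG lam hlam]
  refine (tendsto_intervalIntegral_add_sub hlam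
    (integrableOn_Fim_div_psi hb hσ hβ hm hn hA2 hA3 _) hc0).congr' ?_
  filter_upwards [hc0 self_mem_nhdsWithin] with t ht
  rw [hG _ (add_nonneg hlam (le_of_lt ht)), hG _ (le_of_lt ht)]

theorem conditional_law_converges (b σ β : ℝ) (m n : Measure ℝ)
    (hb : 0 ≤ b) (hσ : 0 ≤ σ) (hβ : 0 ≤ β)
    (hm : IntegrableOn (fun u => min u (u ^ 2)) (Ioi 0) m)
    (hn : IntegrableOn (fun u => min 1 u) (Ioi 0) n)
    (hA1 : IntegrableOn (fun z => (psi b σ m z)⁻¹) (Ioi 1))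
    (hA2 : condA2 b σ β m n) (hA3 : condA3 σ m)
    (v : ℝ → ℝ → ℝ) (hv : IsCumulant b σ m v)
    (hv0 : ∀ t ≥ (0 : ℝ), v t 0 = 0)
    (c : ℝ → ℝ) (hc : IsExtinctionRate b σ m c) :
    ∀ lam ≥ (0 : ℝ),
      Tendsto
        (fun t => (∫ s in Ioi (0 : ℝ), Fim β n (v s (lam + c t))) -
          ∫ s in Ioi (0 : ℝ), Fim β n (v s (c t)))
        atTop (nhds (∫ s in Ioi (0 : ℝ), Fim β n (v s lam))) :=
  conditional_law_converges_general b σ β m n hb hσ hβ hm hn hA2 hA3 v hv hv0 c hc
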